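/- arXiv:1201.6650 — 4 statements merged into one kernel-verified Lean document; each statement's English description precedes it below -/
import Mathlib

section
/- The product filter construction is lax compatible with the filter monad multiplication: for filters of filters 𝔉 ∈ FFX and 𝔊 ∈ FFY, one has (μ_X 𝔉) × (μ_Y 𝔊) ⊆ μ_{X×Y}(Fκ_{X,Y}(𝔉 × 𝔊)), where κ_{X,Y}(𝔵,𝔶) = 𝔵 × 𝔶 is the product filter map. -/
universe u v

namespace Filter

variable {α β : Type*}

/-- If `s ∈ 𝔵` for `𝔉`-many `𝔵` and `t ∈ 𝔶` for `𝔊`-many `𝔶`, then `s ×ˢ t ∈ 𝔵 ×ˢ 𝔶` for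
`𝔉 ×ˢ 𝔊`-many pairs `(𝔵, 𝔶)`. -/
theorem join_map_prod_le_prod_join (𝔉 : Filter (Filter α)) (𝔊 : Filter (Filter β)) :
    join (map (fun p : Filter α × Filter β => p.1 ×ˢ p.2) (𝔉 ×ˢ 𝔊)) ≤ join 𝔉 ×ˢ join 𝔊 := by
  intro A hA
  obtain ⟨s, hs, t, ht, hst⟩ := mem_prod_iff.1 hA
  rw [mem_join, mem_map]
  filter_upwards [prod_mem_prod (mem_join.1 hs) (mem_join.1 ht)]
  rintro ⟨𝔵, 𝔶⟩ ⟨hs𝔵, ht𝔶⟩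
  exact mem_of_superset (prod_mem_prod hs𝔵 ht𝔶) hst

end Filter

/-- Lax compatibility of the product filter with the filter-monad multiplication:
for filters of filters `𝔉` on `FX` and `𝔊` on `FY`, every member of
`(μ_X 𝔉) × (μ_Y 𝔊)` is a member of `μ_{X×Y} (Fκ_{X,Y} (𝔉 × 𝔊))`, where
`κ_{X,Y}` is the product-filter map. -/
theorem prod_filter_lax_mul {X : Type u} {Y : Type v}
    (𝔉 : Filter (Filter X)) (𝔊 : Filter (Filter Y)) :
    ((Filter.join 𝔉) ×ˢ (Filter.join 𝔊)).sets ⊆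
      (Filter.join (Filter.map (fun p : Filter X × Filter Y => p.1 ×ˢ p.2) (𝔉 ×ˢ 𝔊))).sets :=
  fun _ hA => Filter.join_map_prod_le_prod_join 𝔉 𝔊 hA
end

section
/- If (Y, b) is an Eilenberg–Moore algebra for a powerset-enriched monad T on Set, then for any maps f, g : X → Y with f ≤ g pointwise (in the order on Y induced by the algebra structure), one has b ∘ Tf ≤ b ∘ Tg pointwise. -/
universe u

/-- A powerset-enriched monad on `Set`: a monad `(T, η, μ)` together with a monad
morphism `τ` from the powerset monad. -/
structure PSEM : Type (u + 1) where
  T : Type u → Type u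
  map : ∀ {X Y : Type u}, (X → Y) → T X → T Y
  η : ∀ {X : Type u}, X → T X
  μ : ∀ {X : Type u}, T (T X) → T X
  τ : ∀ {X : Type u}, Set X → T X
  map_id : ∀ {X : Type u} (t : T X), map id t = t
  map_comp : ∀ {X Y Z : Type u} (f : X → Y) (g : Y → Z) (t : T X),
    map (g ∘ f) t = map g (map f t)
  η_nat : ∀ {X Y : Type u} (f : X → Y) (x : X), map f (η x) = η (f x)
  μ_nat : ∀ {X Y : Type u} (f : X → Y) (t : T (T X)),
    map f (μ t) = μ (map (map f) t)
  unit_left : ∀ {X : Type u} (t : T X), μ (η t) = t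
  unit_right : ∀ {X : Type u} (t : T X), μ (map η t) = t
  assoc : ∀ {X : Type u} (t : T (T (T X))), μ (μ t) = μ (map μ t)
  τ_nat : ∀ {X Y : Type u} (f : X → Y) (A : Set X), map f (τ A) = τ (f '' A)
  τ_η : ∀ {X : Type u} (x : X), τ ({x} : Set X) = η x
  τ_μ : ∀ {X : Type u} (𝒮 : Set (Set X)), τ (⋃₀ 𝒮) = μ (map τ (τ 𝒮))

namespace PSEM

variable (M : PSEM.{u})

/-- The supremum map `μ_X ∘ τ_{TX} : P(TX) → TX` on `T X`. -/
def ksup {X : Type u} (S : Set (M.T X)) : M.T X := M.μ (M.τ S)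

/-- The order induced on `T X` by the sup-semilattice structure `μ_X ∘ τ_{TX}`. -/
def kle {X : Type u} (t t' : M.T X) : Prop := M.ksup {t, t'} = t'

/-- The order induced on a `T`-algebra `(V, q)` by the sup-semilattice structure
`q ∘ τ_V`. -/
def algLe {V : Type u} (q : M.T V → V) (v w : V) : Prop := q (M.τ {v, w}) = w

/-- Infima in a `T`-algebra `(V, q)`, computed as the supremum of the lower bounds. -/
def algInf {V : Type u} (q : M.T V → V) (S : Set V) : V :=
  q (M.τ {v | ∀ w ∈ S, M.algLe q v w})

end PSEM

/-!
Since `τ` is a monad morphism, `τ` turns unions into joins in `T X`, so `η (f x) = τ {f x}`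
lies below `τ {f x, g x}`. Enrichment lifts this pointwise inequality through `μ ∘ T(-)`,
giving `T f t ≤ μ (T (τ {f, g}) t)` in `T Y`. The algebra map `b` is monotone from `T Y` to
`Y`, and `b ∘ τ {f x, g x} = g x` is exactly the hypothesis `f x ≤ g x`, so applying `b`
yields `b (T f t) ≤ b (T g t)`.
-/

namespace PSEM

variable (M : PSEM.{u})

theorem ksup_τ_pair {X : Type u} (A B : Set X) :
    M.ksup {M.τ A, M.τ B} = M.τ (A ∪ B) := by
  have hunion : ⋃₀ ({A, B} : Set (Set X)) = A ∪ B := Set.sUnion_pair A B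
  rw [ksup, ← Set.image_pair, ← M.τ_nat, ← M.τ_μ, hunion]

theorem kle_τ_of_subset {X : Type u} {A B : Set X} (h : A ⊆ B) :
    M.kle (M.τ A) (M.τ B) := by
  rw [kle, ksup_τ_pair, Set.union_eq_right.mpr h]

theorem μ_map_η_comp {X Y : Type u} (f : X → Y) (t : M.T X) :
    M.μ (M.map (fun x => M.η (f x)) t) = M.map f t := by
  rw [show (fun x => M.η (f x)) = M.η ∘ f from rfl, M.map_comp, M.unit_right]

theorem algLe_of_kle {Y : Type u} {b : M.T Y → Y}
    (hb : ∀ t : M.T (M.T Y), b (M.μ t) = b (M.map b t)) {s s' : M.T Y}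
    (h : M.kle s s') : M.algLe b (b s) (b s') := by
  have hb_sup : b (M.μ (M.τ {s, s'})) = b s' := congrArg b h
  rwa [hb, M.τ_nat, Set.image_pair] at hb_sup

end PSEM

theorem algebra_structure_monotone_general (M : PSEM.{u})
    (enr : ∀ {X Y : Type u} (f g : X → M.T Y),
      (∀ x, M.kle (f x) (g x)) →
      ∀ t : M.T X, M.kle (M.μ (M.map f t)) (M.μ (M.map g t)))
    {X Y : Type u} (b : M.T Y → Y)
    (hb2 : ∀ t : M.T (M.T Y), b (M.μ t) = b (M.map b t))
    (f g : X → Y)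
    (hfg : ∀ x : X, M.algLe b (f x) (g x)) :
    ∀ t : M.T X, M.algLe b (b (M.map f t)) (b (M.map g t)) := by
  intro t
  have hpoint : ∀ x, M.kle (M.η (f x)) (M.τ {f x, g x}) := fun x => by
    rw [← M.τ_η]
    exact M.kle_τ_of_subset (Set.singleton_subset_iff.mpr (Set.mem_insert _ _))
  have hbτ : (b ∘ fun x => M.τ {f x, g x}) = g := funext hfg
  have hmono := M.algLe_of_kle hb2 (enr _ _ hpoint t)
  rwa [M.μ_map_η_comp, hb2, ← M.map_comp, hbτ] at hmono

/-- For a powerset-enriched monad `T` and a `T`-algebra `(Y, b)`, if `f ≤ g`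
pointwise (in the order on `Y` induced by the algebra structure) then
`b ∘ Tf ≤ b ∘ Tg` pointwise. -/
theorem algebra_structure_monotone (M : PSEM.{u})
    (enr : ∀ {X Y : Type u} (f g : X → M.T Y),
      (∀ x, M.kle (f x) (g x)) →
      ∀ t : M.T X, M.kle (M.μ (M.map f t)) (M.μ (M.map g t)))
    {X Y : Type u} (b : M.T Y → Y)
    (hb1 : ∀ y : Y, b (M.η y) = y)
    (hb2 : ∀ t : M.T (M.T Y), b (M.μ t) = b (M.map b t))
    (f g : X → Y)
    (hfg : ∀ x : X, M.algLe b (f x) (g x)) :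
    ∀ t : M.T X, M.algLe b (b (M.map f t)) (b (M.map g t)) :=
  algebra_structure_monotone_general M enr b hb2 f g hfg
end

section
/- For a powerset-enriched monad T, every T-algebra (X, a) gives rise to a T-monoid (X, a*): the right adjoint a* : X → TX of the structure map satisfies reflexivity η_X ≤ a* and transitivity μ_X ∘ T(a*) ∘ a* ≤ a*; moreover every T-algebra homomorphism f : (X,a) → (Y,b) is a T-monoid homomorphism (X, a*) → (Y, b*), i.e., Tf ∘ a* ≤ b* ∘ f. -/
universe u

/-
The algebra order on `X` and the Kleisli order on `T X` are both induced by suprema of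
subsets, and `a` preserves them, so `a` is monotone. Reflexivity `η x ≤ a* x` is
`a (η x) = x`. For transitivity, by the Galois connection it suffices that
`a (μ (T a* (a* x))) = a (T (a ∘ a*) (a* x)) ≤ x`. The map `a ∘ a*` is deflationary, and
enrichment (monotonicity of Kleisli composition) lets `a ∘ T(-)` turn a deflationary map
into a deflationary one: `a (T h t) ≤ a t`. Finally an algebra homomorphism is monotone,
so applying `f` to the counit `a (a* x) ≤ x` gives `b (T f (a* x)) ≤ f x`, which is the
homomorphism condition by the Galois connection for `b`.
-/

namespace PSEM

variable (M : PSEM.{u})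

/-- The enrichment condition on `T`: `μ ∘ T f`, the Kleisli extension of `f`, is monotone
in `f`. -/
def IsEnriched : Prop :=
  ∀ {X Y : Type u} (f g : X → M.T Y), (∀ x, M.kle (f x) (g x)) →
    ∀ t : M.T X, M.kle (M.μ (M.map f t)) (M.μ (M.map g t))

section Algebra

variable {V : Type u} (q : M.T V → V)

theorem alg_tau_sUnion (hq2 : ∀ t : M.T (M.T V), q (M.μ t) = q (M.map q t))
    (S : Set (Set V)) :
    q (M.τ (⋃₀ S)) = q (M.τ ((fun A => q (M.τ A)) '' S)) := by
  rw [M.τ_μ, hq2, ← M.map_comp, M.τ_nat]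
  rfl

theorem algLe_refl (hq1 : ∀ v, q (M.η v) = v) (v : V) : M.algLe q v v := by
  rw [algLe, Set.pair_eq_singleton, M.τ_η, hq1]

theorem algLe_trans (hq1 : ∀ v, q (M.η v) = v)
    (hq2 : ∀ t : M.T (M.T V), q (M.μ t) = q (M.map q t))
    {u v w : V} (huv : M.algLe q u v) (hvw : M.algLe q v w) : M.algLe q u w := by
  -- Both sides are the supremum of `{u, v, w}`, grouped as `{u} ∪ {v, w}` and `{u, v} ∪ {w}`.
  have e₁ := M.alg_tau_sUnion q hq2 {{u}, {v, w}}
  have e₂ := M.alg_tau_sUnion q hq2 {{u, v}, {w}}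
  rw [Set.sUnion_pair, Set.image_pair, M.τ_η, hq1, hvw, Set.singleton_union] at e₁
  rw [Set.sUnion_pair, Set.image_pair, M.τ_η, hq1, huv, Set.union_singleton,
    Set.insert_comm w u, Set.pair_comm w v] at e₂
  rw [algLe, ← e₁, e₂, hvw]

theorem algLe_sup_left (hq1 : ∀ v, q (M.η v) = v)
    (hq2 : ∀ t : M.T (M.T V), q (M.μ t) = q (M.map q t)) (v w : V) :
    M.algLe q v (q (M.τ {v, w})) := by
  have e := M.alg_tau_sUnion q hq2 {{v}, {v, w}}
  rwa [Set.sUnion_pair, Set.image_pair, M.τ_η, hq1, Set.singleton_union,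
    Set.insert_eq_of_mem (Set.mem_insert v _), eq_comm] at e

theorem algLe_alg_of_kle (hq2 : ∀ t : M.T (M.T V), q (M.μ t) = q (M.map q t))
    {t t' : M.T V} (h : M.kle t t') : M.algLe q (q t) (q t') := by
  have h' : M.μ (M.τ {t, t'}) = t' := h
  rw [algLe]
  conv_rhs => rw [← h', hq2, M.τ_nat, Set.image_pair]

end Algebra

theorem kle_refl {V : Type u} (t : M.T V) : M.kle t t :=
  M.algLe_refl M.μ M.unit_left t

theorem eta_kle_tau_pair {V : Type u} (v w : V) : M.kle (M.η v) (M.τ {v, w}) := by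
  have h := M.algLe_sup_left M.μ M.unit_left M.assoc (M.η v) (M.η w)
  rwa [← Set.image_pair, ← M.τ_nat, M.unit_right] at h

theorem algLe_alg_map_of_deflationary (hM : M.IsEnriched) {V : Type u} (q : M.T V → V)
    (hq2 : ∀ t : M.T (M.T V), q (M.μ t) = q (M.map q t))
    {h : V → V} (hh : ∀ v, M.algLe q (h v) v) (t : M.T V) :
    M.algLe q (q (M.map h t)) (q t) := by
  -- Compare `η ∘ h` with `g v = τ {h v, v}`, which `q` collapses back to the identity.
  let g : V → M.T V := fun v => M.τ {h v, v}
  have hle := hM (M.η ∘ h) g (fun v => M.eta_kle_tau_pair (h v) v) t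
  have hηh : M.μ (M.map (M.η ∘ h) t) = M.map h t := by
    rw [M.map_comp, M.unit_right]
  have hqg : q (M.μ (M.map g t)) = q t := by
    rw [hq2, ← M.map_comp, show q ∘ g = id from funext hh, M.map_id]
  rw [← hηh, ← hqg]
  exact M.algLe_alg_of_kle q hq2 hle

theorem algLe_of_hom {V W : Type u} {p : M.T V → V} {q : M.T W → W} {f : V → W}
    (hf : ∀ t, f (p t) = q (M.map f t)) {v w : V} (h : M.algLe p v w) :
    M.algLe q (f v) (f w) := by
  rw [algLe, ← Set.image_pair, ← M.τ_nat, ← hf, h]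

end PSEM

theorem algebra_to_kleisli_monoid_general (M : PSEM.{u})
    (enr : ∀ {X Y : Type u} (f g : X → M.T Y),
      (∀ x, M.kle (f x) (g x)) →
      ∀ t : M.T X, M.kle (M.μ (M.map f t)) (M.μ (M.map g t)))
    {X Y : Type u}
    (a : M.T X → X)
    (ha1 : ∀ x : X, a (M.η x) = x)
    (ha2 : ∀ t : M.T (M.T X), a (M.μ t) = a (M.map a t))
    (astar : X → M.T X)
    (gca : ∀ (t : M.T X) (x : X), M.algLe a (a t) x ↔ M.kle t (astar x))
    (b : M.T Y → Y)
    (bstar : Y → M.T Y)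
    (gcb : ∀ (t : M.T Y) (y : Y), M.algLe b (b t) y ↔ M.kle t (bstar y))
    (f : X → Y)
    (hf : ∀ t : M.T X, f (a t) = b (M.map f t)) :
    (∀ x : X, M.kle (M.η x) (astar x)) ∧
    (∀ x : X, M.kle (M.μ (M.map astar (astar x))) (astar x)) ∧
    (∀ x : X, M.kle (M.map f (astar x)) (bstar (f x))) := by
  have counit : ∀ x, M.algLe a (a (astar x)) x := fun x =>
    (gca (astar x) x).mpr (M.kle_refl (astar x))
  refine ⟨fun x => (gca _ x).mp ?_, fun x => (gca _ x).mp ?_, fun x => (gcb _ _).mp ?_⟩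
  · rw [ha1]
    exact M.algLe_refl a ha1 x
  · rw [ha2, ← M.map_comp]
    exact M.algLe_trans a ha1 ha2
      (M.algLe_alg_map_of_deflationary enr a ha2 counit (astar x)) (counit x)
  · rw [← hf]
    exact M.algLe_of_hom hf (counit x)

/-- For a powerset-enriched monad `T`, every `T`-algebra `(X, a)` gives a `T`-monoid
`(X, a*)`: the right adjoint `a*` of the structure map satisfies reflexivity
`η_X ≤ a*` and transitivity `μ_X ∘ T(a*) ∘ a* ≤ a*`, and every `T`-algebra
homomorphism `f : (X,a) → (Y,b)` satisfies `Tf ∘ a* ≤ b* ∘ f`. -/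
theorem algebra_to_kleisli_monoid (M : PSEM.{u})
    (enr : ∀ {X Y : Type u} (f g : X → M.T Y),
      (∀ x, M.kle (f x) (g x)) →
      ∀ t : M.T X, M.kle (M.μ (M.map f t)) (M.μ (M.map g t)))
    {X Y : Type u}
    (a : M.T X → X)
    (ha1 : ∀ x : X, a (M.η x) = x)
    (ha2 : ∀ t : M.T (M.T X), a (M.μ t) = a (M.map a t))
    (astar : X → M.T X)
    (gca : ∀ (t : M.T X) (x : X), M.algLe a (a t) x ↔ M.kle t (astar x))
    (b : M.T Y → Y)
    (hb1 : ∀ y : Y, b (M.η y) = y)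
    (hb2 : ∀ t : M.T (M.T Y), b (M.μ t) = b (M.map b t))
    (bstar : Y → M.T Y)
    (gcb : ∀ (t : M.T Y) (y : Y), M.algLe b (b t) y ↔ M.kle t (bstar y))
    (f : X → Y)
    (hf : ∀ t : M.T X, f (a t) = b (M.map f t)) :
    (∀ x : X, M.kle (M.η x) (astar x)) ∧
    (∀ x : X, M.kle (M.μ (M.map astar (astar x))) (astar x)) ∧
    (∀ x : X, M.kle (M.map f (astar x)) (bstar (f x))) :=
  algebra_to_kleisli_monoid_general M enr a ha1 ha2 astar gca b bstar gcb f hf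
end

section
/- Let V be a commutative quantale. For V-categories (X, α) in the Kleisli-monoid presentation, the convergence structure on the hom-object [X,V] given by conv(φ) = ⋁_{f ∈ [X,V]} φ(f) ⊗ f (pointwise) makes [X,V] into a P_V-algebra; in particular the V-category of V-functors X → V is tensored/cocomplete, recovering that V-Cat is monoidal closed with respect to the tensor product. -/
/-!
Weighted joins `⋁_f φ(f) ⊗ f` of `V`-functors are again `V`-functors because `⊗` distributes
over joins. Under the same distributivity, both Eilenberg–Moore laws come down to regrouping a
join over the fibres of `conv` and exchanging two joins.
-/

universe u

/-- The set of `V`-functors `(X, α) → V`, i.e. maps `f : X → V` with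
`⨆ y, α x y * f y ≤ f x` for all `x`. -/
abbrev VHom {V : Type u} [CompleteLattice V] [Mul V] {X : Type u} (α : X → X → V) :
    Type u :=
  {f : X → V // ∀ x : X, (⨆ y : X, α x y * f y) ≤ f x}


theorem IsQuantale.of_mul_sSup_distrib {V : Type*} [CommSemigroup V] [CompleteLattice V]
    (h : ∀ (a : V) (s : Set V), a * sSup s = ⨆ b ∈ s, a * b) : IsQuantale V where
  mul_sSup_distrib := h
  sSup_mul_distrib s a := by simpa only [mul_comm _ a] using h a s

open Quantale

theorem iSup_fiber_mul {V A B : Type*} [Semigroup V] [CompleteLattice V] [IsQuantale V]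
    (c : A → B) (F : A → V) (h : B → V) :
    ⨆ b, (⨆ a : {a // c a = b}, F a) * h b = ⨆ a, F a * h (c a) := by
  simp_rw [iSup_mul_distrib, iSup_subtype]
  rw [iSup_comm]
  exact iSup_congr fun a => iSup_iSup_eq_right

theorem iSup_prop_mul {V : Type*} [Semigroup V] [CompleteLattice V] [IsQuantale V]
    (p : Prop) (a b : V) : (⨆ _ : p, a) * b = ⨆ _ : p, a * b := by
  by_cases hp : p <;> simp [hp]

namespace VHom

variable {V : Type u} [CommMonoid V] [CompleteLattice V] [IsQuantale V] {X : Type u}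
  {α : X → X → V}

def conv (φ : VHom α → V) : VHom α :=
  ⟨fun x => ⨆ f : VHom α, φ f * f.1 x, fun x => iSup_le fun y => by
    rw [mul_iSup_distrib]
    refine iSup_le fun f => le_iSup_of_le f ?_
    rw [mul_left_comm]
    gcongr
    exact (le_iSup _ y).trans (f.2 x)⟩

theorem conv_apply (φ : VHom α → V) (x : X) :
    (conv φ).1 x = ⨆ f : VHom α, φ f * f.1 x :=
  rfl

theorem conv_pure (f : VHom α) : conv (fun g => ⨆ _ : g = f, (1 : V)) = f := by
  ext x
  simp [conv_apply, iSup_prop_mul]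

theorem conv_join (Φ : (VHom α → V) → V) :
    conv (fun g => ⨆ φ : {φ : VHom α → V // conv φ = g}, Φ φ.1) =
      conv (fun g => ⨆ φ : VHom α → V, Φ φ * φ g) := by
  ext x
  calc (⨆ g : VHom α, (⨆ φ : {φ : VHom α → V // conv φ = g}, Φ φ.1) * g.1 x)
      = ⨆ φ : VHom α → V, ⨆ f : VHom α, Φ φ * φ f * f.1 x := by
        simp only [iSup_fiber_mul conv Φ (fun g => g.1 x), conv_apply, mul_iSup_distrib,
          mul_assoc]
    _ = ⨆ f : VHom α, (⨆ φ : VHom α → V, Φ φ * φ f) * f.1 x := by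
        rw [iSup_comm]
        simp only [iSup_mul_distrib]

end VHom

theorem vcat_hom_is_pv_algebra_general {V : Type u} [CompleteLattice V] [CommMonoid V]
    (hdist : ∀ (a : V) (S : Set V), a * sSup S = ⨆ b ∈ S, a * b)
    {X : Type u} (α : X → X → V) :
    ∃ conv : (VHom α → V) → VHom α,
      (∀ (φ : VHom α → V) (x : X),
        ((conv φ : VHom α) : X → V) x = ⨆ f : VHom α, φ f * (f : X → V) x) ∧
      (∀ f : VHom α, conv (fun g => ⨆ _ : g = f, (1 : V)) = f) ∧
      (∀ Φ : (VHom α → V) → V,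
        conv (fun g => ⨆ φ : {φ : VHom α → V // conv φ = g}, Φ φ.1) =
          conv (fun g => ⨆ φ : VHom α → V, Φ φ * φ g)) :=
  have := IsQuantale.of_mul_sSup_distrib hdist
  ⟨VHom.conv, VHom.conv_apply, VHom.conv_pure, VHom.conv_join⟩

/-- For a commutative quantale `V` and a `V`-category `(X, α)`, the convergence map
`conv φ = ⋁_f φ(f) ⊗ f` (computed pointwise) makes the hom-object `[X,V]` of
`V`-functors `X → V` into an algebra for the `V`-powerset monad `P_V`: it satisfies
the Eilenberg–Moore laws `conv ∘ η = id` and `conv ∘ P_V conv = conv ∘ μ`. This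
recovers that `V`-Cat is monoidal closed for the tensor product. -/
theorem vcat_hom_is_pv_algebra {V : Type u} [CompleteLattice V] [CommMonoid V]
    (hdist : ∀ (a : V) (S : Set V), a * sSup S = ⨆ b ∈ S, a * b)
    {X : Type u} (α : X → X → V)
    (hrefl : ∀ x : X, (1 : V) ≤ α x x)
    (htrans : ∀ x y z : X, α x y * α y z ≤ α x z) :
    ∃ conv : (VHom α → V) → VHom α,
      (∀ (φ : VHom α → V) (x : X),
        ((conv φ : VHom α) : X → V) x = ⨆ f : VHom α, φ f * (f : X → V) x) ∧
      (∀ f : VHom α, conv (fun g => ⨆ _ : g = f, (1 : V)) = f) ∧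
      (∀ Φ : (VHom α → V) → V,
        conv (fun g => ⨆ φ : {φ : VHom α → V // conv φ = g}, Φ φ.1) =
          conv (fun g => ⨆ φ : VHom α → V, Φ φ * φ g)) :=
  vcat_hom_is_pv_algebra_general hdist α
end
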